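/- Let M, N be positive integers, A ∈ ℂ^{M×N}, and suppose every eigenvalue of the Hermitian positive semidefinite matrix A·Aᴴ lies in [λmin, λmax], where 0 ≤ λmin ≤ λmax. Set λ† = (λmax + λmin)/2, B = λ†·I_M − A·Aᴴ, b_k = (1/N)·tr(Bᵏ), w_k = λ†·b_k − b_{k+1}, and, for σ² > 0, θ₀ = (λ† + σ²)⁻¹ and χ_k = θ₀ᵏ·w_k. Then for every natural number k, |χ_k| ≤ (M/N)·(λ† + θ₀⁻¹). (Lemma 2 of the paper.) -/

import Mathlib

/-!
In an eigenbasis of `A * Aᴴ` (eigenvalues `λᵢ`), `λ† B^k - B^(k+1) = B^k * A * Aᴴ` has trace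
`∑ (λ† - λᵢ)^k λᵢ`, so `χ_k = N⁻¹ ∑ (θ₀ (λ† - λᵢ))^k λᵢ`. As `0 ≤ λᵢ ≤ λmax` and
`|λ† - λᵢ| ≤ λ† < θ₀⁻¹`, every term is bounded by `λmax ≤ λ† + θ₀⁻¹`.
-/

open Matrix

namespace Matrix.IsHermitian

variable {𝕜 n : Type*} [RCLike 𝕜] [Fintype n] [DecidableEq n] {A : Matrix n n 𝕜}

theorem trace_cfc (hA : A.IsHermitian) (f : ℝ → ℝ) :
    trace (cfc f A) = ∑ i, (f (hA.eigenvalues i) : 𝕜) := by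
  rw [hA.cfc_eq, IsHermitian.cfc, Unitary.conjStarAlgAut_apply, trace_mul_cycle,
    Unitary.coe_star_mul_self, one_mul, trace_diagonal]
  rfl

theorem cfc_sub_pow_mul (hA : A.IsHermitian) (c : ℝ) (k : ℕ) :
    cfc (fun x => (c - x) ^ k * x) A = (c • 1 - A) ^ k * A := by
  have hA' : IsSelfAdjoint A := hA
  rw [cfc_mul (fun x => (c - x) ^ k) (fun x => x) A, cfc_pow (fun x => c - x) k A,
    cfc_sub (fun _ => c) (fun x => x) A, cfc_const c A, cfc_id' ℝ A,
    Algebra.algebraMap_eq_smul_one]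

theorem trace_sub_pow_mul (hA : A.IsHermitian) (c : ℝ) (k : ℕ) :
    trace ((c • 1 - A) ^ k * A) =
      ∑ i, (((c - hA.eigenvalues i) ^ k * hA.eigenvalues i : ℝ) : 𝕜) := by
  rw [← hA.cfc_sub_pow_mul, hA.trace_cfc]

end Matrix.IsHermitian

theorem Matrix.mul_trace_pow_sub_trace_pow_succ {R n : Type*} [CommRing R] [Fintype n]
    [DecidableEq n] (B : Matrix n n R) (c : R) (k : ℕ) :
    c * trace (B ^ k) - trace (B ^ (k + 1)) = trace (B ^ k * (c • 1 - B)) := by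
  rw [mul_sub, mul_smul_comm, mul_one, trace_sub, trace_smul, pow_succ, smul_eq_mul]

theorem abs_inv_add_mul_midpoint_sub_le_one {a b x s : ℝ} (ha : 0 ≤ a) (hax : a ≤ x)
    (hxb : x ≤ b) (hs : 0 < s) : |((b + a) / 2 + s)⁻¹ * ((b + a) / 2 - x)| ≤ 1 := by
  have hmid : |(b + a) / 2 - x| ≤ (b + a) / 2 := abs_le.2 ⟨by linarith, by linarith⟩
  rw [abs_mul, abs_inv, abs_of_pos (by linarith), inv_mul_le_one₀ (by linarith)]
  linarith

theorem abs_sum_pow_mul_le {ι : Type*} [Fintype ι] {t x : ι → ℝ} {a : ℝ}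
    (ht : ∀ i, |t i| ≤ 1) (hx : ∀ i, 0 ≤ x i ∧ x i ≤ a) (k : ℕ) :
    |∑ i, t i ^ k * x i| ≤ Fintype.card ι * a := by
  calc |∑ i, t i ^ k * x i| ≤ ∑ i, |t i ^ k * x i| := Finset.abs_sum_le_sum_abs _ _
    _ ≤ ∑ _i : ι, a := Finset.sum_le_sum fun i _ => by
        rw [abs_mul, abs_pow, abs_of_nonneg (hx i).1]
        exact (mul_le_mul (pow_le_one₀ (abs_nonneg _) (ht i)) (hx i).2 (hx i).1
          zero_le_one).trans_eq (one_mul a)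
    _ = Fintype.card ι * a := by rw [Finset.sum_const, Finset.card_univ, nsmul_eq_mul]

theorem oa_gd_mamp_chi_bound_general
    (M N : ℕ)
    (A : Matrix (Fin M) (Fin N) ℂ)
    (lmin lmax : ℝ) (hlmin : 0 ≤ lmin)
    (hH : (A * Aᴴ).IsHermitian)
    (heig : ∀ i, lmin ≤ hH.eigenvalues i ∧ hH.eigenvalues i ≤ lmax)
    (σ2 : ℝ) (hσ2 : 0 < σ2)
    (ld θ0 : ℝ)
    (hld : ld = (lmax + lmin) / 2)
    (hθ0 : θ0 = (ld + σ2)⁻¹)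
    (B : Matrix (Fin M) (Fin M) ℂ)
    (hB : B = (ld : ℂ) • (1 : Matrix (Fin M) (Fin M) ℂ) - A * Aᴴ)
    (b w χ : ℕ → ℂ)
    (hb : ∀ k, b k = (1 / (N : ℂ)) * Matrix.trace (B ^ k))
    (hw : ∀ k, w k = (ld : ℂ) * b k - b (k + 1))
    (hχ : ∀ k, χ k = (θ0 : ℂ) ^ k * w k) :
    ∀ k : ℕ, ‖χ k‖ ≤ ((M : ℝ) / (N : ℝ)) * (ld + θ0⁻¹) := by
  intro k
  have hχ_eq : χ k =
      (((N : ℝ)⁻¹ * ∑ i, (θ0 * (ld - hH.eigenvalues i)) ^ k * hH.eigenvalues i : ℝ) : ℂ) := by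
    rw [hχ, hw, hb, hb, mul_left_comm, ← mul_sub, mul_trace_pow_sub_trace_pow_succ, hB,
      sub_sub_cancel, Complex.coe_smul, hH.trace_sub_pow_mul]
    simp only [mul_pow, Complex.coe_algebraMap]
    push_cast
    rw [Finset.mul_sum, Finset.mul_sum, Finset.mul_sum]
    refine Finset.sum_congr rfl fun i _ => by ring
  have hcontr : ∀ i, |θ0 * (ld - hH.eigenvalues i)| ≤ 1 := fun i => by
    rw [hθ0, hld]
    exact abs_inv_add_mul_midpoint_sub_le_one hlmin (heig i).1 (heig i).2 hσ2
  have hsum := abs_sum_pow_mul_le hcontr (fun i => ⟨hlmin.trans (heig i).1, (heig i).2⟩) k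
  rw [Fintype.card_fin] at hsum
  rw [hχ_eq, Complex.norm_real, Real.norm_eq_abs, abs_mul, abs_of_nonneg (by positivity)]
  calc (N : ℝ)⁻¹ * |∑ i, (θ0 * (ld - hH.eigenvalues i)) ^ k * hH.eigenvalues i|
        ≤ (N : ℝ)⁻¹ * (M * lmax) := by gcongr
    _ = M / N * lmax := by ring
    _ ≤ M / N * (ld + θ0⁻¹) := by
      gcongr
      rw [hθ0, inv_inv, hld]
      linarith

/-- Lemma 2 of the paper: the rescaled coefficients `χ_k = θ₀ᵏ · w_k` are bounded,
so computing them carries no risk of overflow. -/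
theorem oa_gd_mamp_chi_bound
    (M N : ℕ) (hM : 0 < M) (hN : 0 < N)
    (A : Matrix (Fin M) (Fin N) ℂ)
    (lmin lmax : ℝ) (hlmin : 0 ≤ lmin) (hle : lmin ≤ lmax)
    (hH : (A * Aᴴ).IsHermitian)
    (heig : ∀ i, lmin ≤ hH.eigenvalues i ∧ hH.eigenvalues i ≤ lmax)
    (σ2 : ℝ) (hσ2 : 0 < σ2)
    (ld θ0 : ℝ)
    (hld : ld = (lmax + lmin) / 2)
    (hθ0 : θ0 = (ld + σ2)⁻¹)
    (B : Matrix (Fin M) (Fin M) ℂ)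
    (hB : B = (ld : ℂ) • (1 : Matrix (Fin M) (Fin M) ℂ) - A * Aᴴ)
    (b w χ : ℕ → ℂ)
    (hb : ∀ k, b k = (1 / (N : ℂ)) * Matrix.trace (B ^ k))
    (hw : ∀ k, w k = (ld : ℂ) * b k - b (k + 1))
    (hχ : ∀ k, χ k = (θ0 : ℂ) ^ k * w k) :
    ∀ k : ℕ, ‖χ k‖ ≤ ((M : ℝ) / (N : ℝ)) * (ld + θ0⁻¹) :=
  oa_gd_mamp_chi_bound_general M N A lmin lmax hlmin hH heig σ2 hσ2 ld θ0 hld hθ0 B hB b w χ hb hw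
    hχ
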